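/- arXiv:2509.14079 — 2 statements merged into one kernel-verified Lean document; each statement's English description precedes it below -/
import Mathlib

section
/- Given σ_0 ∈ ℝ^k, a linear map σ_1 : ℝ^m → ℝ^k, and ε, r > 0, there exists λ > 0 such that the function s_λ : ℝ^m → ℝ^k defined by s_λ(v) = e^{−λ‖v‖²} σ_1(v) + σ_0 satisfies: (a) s_λ(0) = σ_0 and D_0 s_λ = σ_1; (b) sup_{v∈ℝ^m} ‖s_λ(v)‖ ≤ ‖σ_0‖ + ε; (c) sup_{v∈ℝ^m} ‖D_v s_λ‖ ≤ ‖σ_1‖ + ε; (d) sup_{‖v‖≥r} ‖D_v s_λ‖ ≤ ε. -/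
open scoped Manifold ENNReal Classical
open Function Set Topology Filter MeasureTheory

noncomputable section

/-- `ℝⁿ` with the Euclidean norm. -/
abbrev Euc (n : ℕ) : Type := EuclideanSpace ℝ (Fin n)

/-!
Write `t = λ‖v‖²`. The derivative of `s_λ` at `v` is `e^{-t} σ₁ ∘ (1 - 2λ v ⊗ v)`, and for `c ≥ 0`
the map `1 - c v ⊗ v` has operator norm at most `max 1 (c‖v‖² - 1)`, so
`‖D_v s_λ‖ ≤ ‖σ₁‖ e^{-t} max 1 (2t - 1)`. Since `max 1 (2t - 1) ≤ e^t` this is at most `‖σ₁‖`,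
and since it is also at most `4 e^{-t/2}` it tends to `0` uniformly on `‖v‖ ≥ r` as `λ → ∞`.
Likewise `‖v‖ e^{-λ‖v‖²} ≤ 1 / √λ`, so `s_λ - σ₀` is uniformly small for large `λ`.
-/

open Real
open scoped RealInnerProductSpace

lemma max_one_two_mul_sub_one_le_exp {t : ℝ} (ht : 0 ≤ t) : max 1 (2 * t - 1) ≤ exp t :=
  max_le (one_le_exp ht) (by nlinarith [quadratic_le_exp_of_nonneg ht])

lemma max_one_two_mul_sub_one_le_four_mul_exp_half {t : ℝ} (ht : 0 ≤ t) :
    max 1 (2 * t - 1) ≤ 4 * exp (t / 2) :=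
  max_le (by linarith [add_one_le_exp (t / 2)]) (by linarith [add_one_le_exp (t / 2)])

lemma exp_neg_mul_max_one_two_mul_sub_one_le_one {t : ℝ} (ht : 0 ≤ t) :
    exp (-t) * max 1 (2 * t - 1) ≤ 1 := by
  calc exp (-t) * max 1 (2 * t - 1) ≤ exp (-t) * exp t := by
        gcongr; exact max_one_two_mul_sub_one_le_exp ht
    _ = 1 := by rw [← exp_add, neg_add_cancel, exp_zero]

lemma exp_neg_mul_max_one_two_mul_sub_one_le {t : ℝ} (ht : 0 ≤ t) :
    exp (-t) * max 1 (2 * t - 1) ≤ 4 * exp (-(t / 2)) := by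
  calc exp (-t) * max 1 (2 * t - 1) ≤ exp (-t) * (4 * exp (t / 2)) := by
        gcongr; exact max_one_two_mul_sub_one_le_four_mul_exp_half ht
    _ = 4 * exp (-(t / 2)) := by rw [mul_left_comm, ← exp_add]; ring_nf

lemma mul_sqrt_mul_exp_neg_mul_sq_le_one {lam : ℝ} (hl : 0 ≤ lam) (x : ℝ) :
    x * √lam * exp (-(lam * x ^ 2)) ≤ 1 := by
  have hy : x * √lam ≤ 1 + lam * x ^ 2 := by
    have : (x * √lam) ^ 2 = lam * x ^ 2 := by rw [mul_pow, sq_sqrt hl, mul_comm]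
    nlinarith [sq_nonneg (x * √lam - 1)]
  calc x * √lam * exp (-(lam * x ^ 2)) ≤ exp (lam * x ^ 2) * exp (-(lam * x ^ 2)) := by
        gcongr; linarith [add_one_le_exp (lam * x ^ 2)]
    _ = 1 := by rw [← exp_add, add_neg_cancel, exp_zero]

section InnerProductSpace

variable {E : Type*} [NormedAddCommGroup E] [InnerProductSpace ℝ E]

lemma norm_sub_smul_inner_smul_le {c : ℝ} (hc : 0 ≤ c) (v w : E) :
    ‖w - (c * ⟪v, w⟫) • v‖ ≤ max 1 (c * ‖v‖ ^ 2 - 1) * ‖w‖ := by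
  have hcs : ⟪v, w⟫ ^ 2 ≤ ‖v‖ ^ 2 * ‖w‖ ^ 2 := by
    rw [← mul_pow, ← sq_abs]
    exact pow_le_pow_left₀ (abs_nonneg _) (abs_real_inner_le_norm v w) 2
  have hsq : ‖w - (c * ⟪v, w⟫) • v‖ ^ 2 =
      ‖w‖ ^ 2 + c * (c * ‖v‖ ^ 2 - 2) * ⟪v, w⟫ ^ 2 := by
    rw [norm_sub_sq_real, real_inner_smul_right, norm_smul, real_inner_comm w v, mul_pow,
      Real.norm_eq_abs, sq_abs]
    ring
  apply le_of_pow_le_pow_left₀ two_ne_zero (by positivity)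
  rw [hsq, mul_pow]
  rcases le_total (c * ‖v‖ ^ 2) 2 with h | h
  · have hneg : c * (c * ‖v‖ ^ 2 - 2) * ⟪v, w⟫ ^ 2 ≤ 0 :=
      mul_nonpos_of_nonpos_of_nonneg (mul_nonpos_of_nonneg_of_nonpos hc (by linarith)) (sq_nonneg _)
    have hmax : 1 ≤ max 1 (c * ‖v‖ ^ 2 - 1) ^ 2 := one_le_pow₀ (le_max_left _ _)
    nlinarith [sq_nonneg ‖w‖]
  · have hm : max 1 (c * ‖v‖ ^ 2 - 1) = c * ‖v‖ ^ 2 - 1 := max_eq_right (by linarith)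
    rw [hm]
    nlinarith [mul_le_mul_of_nonneg_left hcs (mul_nonneg hc (by linarith : 0 ≤ c * ‖v‖ ^ 2 - 2))]

lemma norm_id_sub_smul_smulRight_innerSL_le {c : ℝ} (hc : 0 ≤ c) (v : E) :
    ‖ContinuousLinearMap.id ℝ E - c • (innerSL ℝ v).smulRight v‖ ≤ max 1 (c * ‖v‖ ^ 2 - 1) :=
  ContinuousLinearMap.opNorm_le_bound _ (le_trans zero_le_one (le_max_left _ _)) fun w => by
    simpa [smul_smul] using norm_sub_smul_inner_smul_le hc v w

end InnerProductSpace

section Cutoff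

variable {E F : Type*} [NormedAddCommGroup E] [InnerProductSpace ℝ E]
  [NormedAddCommGroup F] [NormedSpace ℝ F]

def gaussianCutoff (lam : ℝ) (σ0 : F) (σ1 : E →L[ℝ] F) (v : E) : F :=
  exp (-(lam * ‖v‖ ^ 2)) • σ1 v + σ0

variable (lam : ℝ) (σ0 : F) (σ1 : E →L[ℝ] F)

lemma gaussianCutoff_zero : gaussianCutoff lam σ0 σ1 0 = σ0 := by
  simp [gaussianCutoff]

lemma hasFDerivAt_gaussianCutoff (v : E) :
    HasFDerivAt (gaussianCutoff lam σ0 σ1)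
      (exp (-(lam * ‖v‖ ^ 2)) •
        σ1.comp (ContinuousLinearMap.id ℝ E - (2 * lam) • (innerSL ℝ v).smulRight v)) v := by
  have hexp : HasFDerivAt (fun w : E => exp (-(lam * ‖w‖ ^ 2)))
      (exp (-(lam * ‖v‖ ^ 2)) • -(lam • (2 : ℕ) • innerSL ℝ v)) v :=
    (((hasFDerivAt_id v).norm_sq.const_mul lam).neg).exp
  refine ((hexp.smul σ1.hasFDerivAt).add_const σ0).congr_fderiv ?_
  ext w
  simp only [smul_neg, add_apply, smul_apply, ContinuousLinearMap.smulRight_apply, neg_apply,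
    coe_innerSL_apply, nsmul_eq_mul, Nat.cast_ofNat, smul_eq_mul, neg_smul,
    ContinuousLinearMap.comp_sub, ContinuousLinearMap.comp_id, ContinuousLinearMap.comp_smulₛₗ,
    ringHom_apply, sub_apply, ContinuousLinearMap.comp_apply, map_smul]
  module

lemma fderiv_gaussianCutoff_zero : fderiv ℝ (gaussianCutoff lam σ0 σ1) 0 = σ1 := by
  rw [(hasFDerivAt_gaussianCutoff lam σ0 σ1 0).fderiv]
  ext w
  simp

variable {lam}

lemma norm_gaussianCutoff_le (hl : 0 ≤ lam) {ε : ℝ} (hε : 0 ≤ ε) (hσ1 : ‖σ1‖ ≤ ε * √lam)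
    (v : E) : ‖gaussianCutoff lam σ0 σ1 v‖ ≤ ‖σ0‖ + ε := by
  have hdecay : ‖exp (-(lam * ‖v‖ ^ 2)) • σ1 v‖ ≤ ε :=
    calc ‖exp (-(lam * ‖v‖ ^ 2)) • σ1 v‖ ≤ exp (-(lam * ‖v‖ ^ 2)) * (‖σ1‖ * ‖v‖) := by
          rw [norm_smul, norm_of_nonneg (exp_nonneg _)]; gcongr; exact σ1.le_opNorm v
      _ ≤ exp (-(lam * ‖v‖ ^ 2)) * (ε * √lam * ‖v‖) := by gcongr
      _ = ε * (‖v‖ * √lam * exp (-(lam * ‖v‖ ^ 2))) := by ring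
      _ ≤ ε := mul_le_of_le_one_right hε (mul_sqrt_mul_exp_neg_mul_sq_le_one hl _)
  calc ‖gaussianCutoff lam σ0 σ1 v‖ ≤ ‖exp (-(lam * ‖v‖ ^ 2)) • σ1 v‖ + ‖σ0‖ := norm_add_le _ _
    _ ≤ ‖σ0‖ + ε := by linarith

lemma norm_fderiv_gaussianCutoff_le (hl : 0 ≤ lam) (v : E) :
    ‖fderiv ℝ (gaussianCutoff lam σ0 σ1) v‖ ≤
      ‖σ1‖ * (exp (-(lam * ‖v‖ ^ 2)) * max 1 (2 * (lam * ‖v‖ ^ 2) - 1)) := by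
  rw [(hasFDerivAt_gaussianCutoff lam σ0 σ1 v).fderiv, norm_smul, norm_of_nonneg (exp_nonneg _),
    mul_left_comm, ← mul_assoc 2]
  gcongr
  exact (σ1.opNorm_comp_le _).trans
    (mul_le_mul_of_nonneg_left (norm_id_sub_smul_smulRight_innerSL_le (by positivity) v)
      (norm_nonneg _))

lemma norm_fderiv_gaussianCutoff_le_norm (hl : 0 ≤ lam) (v : E) :
    ‖fderiv ℝ (gaussianCutoff lam σ0 σ1) v‖ ≤ ‖σ1‖ :=
  (norm_fderiv_gaussianCutoff_le σ0 σ1 hl v).trans <| mul_le_of_le_one_right (norm_nonneg _)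
    (exp_neg_mul_max_one_two_mul_sub_one_le_one (by positivity))

lemma norm_fderiv_gaussianCutoff_le_of_le_norm (hl : 0 ≤ lam) {r : ℝ} (hr : 0 ≤ r) {v : E}
    (hv : r ≤ ‖v‖) :
    ‖fderiv ℝ (gaussianCutoff lam σ0 σ1) v‖ ≤ ‖σ1‖ * (4 * exp (-(lam * r ^ 2 / 2))) := by
  refine (norm_fderiv_gaussianCutoff_le σ0 σ1 hl v).trans
    (mul_le_mul_of_nonneg_left ?_ (norm_nonneg _))
  refine (exp_neg_mul_max_one_two_mul_sub_one_le (by positivity)).trans ?_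
  gcongr

end Cutoff

/-- The Gaussian cut-off of a first jet. Given `σ₀ ∈ ℝᵏ`, a linear map `σ₁ : ℝᵐ → ℝᵏ`
and `ε, r > 0`, there is `λ > 0` such that `s_λ(v) = e^{-λ‖v‖²} σ₁(v) + σ₀` satisfies:
(a) `s_λ(0) = σ₀` and `D₀ s_λ = σ₁`; (b) `‖s_λ‖ ≤ ‖σ₀‖ + ε` everywhere;
(c) `‖D_v s_λ‖ ≤ ‖σ₁‖ + ε` everywhere; (d) `‖D_v s_λ‖ ≤ ε` for `‖v‖ ≥ r`. -/
theorem gaussian_jet_cutoff (m k : ℕ) (σ0 : Euc k) (σ1 : Euc m →L[ℝ] Euc k) (ε r : ℝ)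
    (hε : 0 < ε) (hr : 0 < r) :
    ∃ lam : ℝ, 0 < lam ∧
      ((fun v : Euc m => Real.exp (-(lam * ‖v‖ ^ 2)) • σ1 v + σ0) 0 = σ0 ∧
        fderiv ℝ (fun v : Euc m => Real.exp (-(lam * ‖v‖ ^ 2)) • σ1 v + σ0) 0 = σ1) ∧
      (∀ v : Euc m, ‖Real.exp (-(lam * ‖v‖ ^ 2)) • σ1 v + σ0‖ ≤ ‖σ0‖ + ε) ∧
      (∀ v : Euc m,
        ‖fderiv ℝ (fun w : Euc m => Real.exp (-(lam * ‖w‖ ^ 2)) • σ1 w + σ0) v‖ ≤ ‖σ1‖ + ε) ∧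
      (∀ v : Euc m, r ≤ ‖v‖ →
        ‖fderiv ℝ (fun w : Euc m => Real.exp (-(lam * ‖w‖ ^ 2)) • σ1 w + σ0) v‖ ≤ ε) := by
  have hsup : ∀ᶠ lam in atTop, ‖σ1‖ ≤ ε * √lam :=
    (tendsto_sqrt_atTop.const_mul_atTop hε).eventually_ge_atTop _
  have hfar : ∀ᶠ lam in atTop, ‖σ1‖ * (4 * exp (-(lam * r ^ 2 / 2))) < ε := by
    have hlim : Tendsto (fun lam : ℝ => ‖σ1‖ * (4 * exp (-(lam * r ^ 2 / 2)))) atTop (𝓝 0) := by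
      simpa [mul_div_assoc] using ((tendsto_exp_neg_atTop_nhds_zero.comp
        (tendsto_id.atTop_mul_const (by positivity : 0 < r ^ 2 / 2))).const_mul 4).const_mul ‖σ1‖
    exact hlim.eventually_lt_const hε
  obtain ⟨lam, hl, hsup, hfar⟩ := ((eventually_gt_atTop 0).and (hsup.and hfar)).exists
  refine ⟨lam, hl, ⟨gaussianCutoff_zero lam σ0 σ1, fderiv_gaussianCutoff_zero lam σ0 σ1⟩,
    norm_gaussianCutoff_le σ0 σ1 hl.le hε.le hsup, fun v => ?_, fun v hv => ?_⟩
  · exact (norm_fderiv_gaussianCutoff_le_norm σ0 σ1 hl.le v).trans (le_add_of_nonneg_right hε.le)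
  · exact (norm_fderiv_gaussianCutoff_le_of_le_norm σ0 σ1 hl.le hr.le hv).trans hfar.le
end
end

section
/- Let F = {f_1,…,f_s} ⊆ C^1(M,ℝ) be a regular family on a compact Riemannian manifold M, and let S = ⋃_i ⋂_{j=1}^s {f_j *_{ij} 0} be a semialgebraic-type set on F with *_{ij} ∈ {<,>,=}. Then the closure of S is given by replacing each strict relation with its closed counterpart: cl(S) = ⋃_i ⋂_{j=1}^s {f_j \bar*_{ij} 0}, where \bar*_{ij} is ≤, ≥, or = according as *_{ij} is <, >, or =. -/
open scoped Manifold ENNReal Classical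
open Function Set Topology Filter MeasureTheory

noncomputable section

/-- A Riemannian metric on a smooth manifold `M` modelled on `ℝᵐ`: a smooth, symmetric,
positive definite family of inner products on the tangent spaces. -/
structure RiemannianMetric (m : ℕ) (M : Type) [TopologicalSpace M] [ChartedSpace (Euc m) M]
    [IsManifold (𝓡 m) (⊤ : ℕ∞) M] where
  inn : ∀ x : M, TangentSpace (𝓡 m) x → TangentSpace (𝓡 m) x → ℝ
  symm : ∀ x u v, inn x u v = inn x v u
  add_left : ∀ x u v w, inn x (u + v) w = inn x u w + inn x v w
  smul_left : ∀ (x : M) (c : ℝ) (u v : TangentSpace (𝓡 m) x), inn x (c • u) v = c * inn x u v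
  posdef : ∀ (x : M) (v : TangentSpace (𝓡 m) x), v ≠ 0 → 0 < inn x v v
  smooth : ContMDiff (𝓡 m).tangent 𝓘(ℝ, ℝ) (⊤ : ℕ∞)
      (fun p : TangentBundle (𝓡 m) M => inn p.proj p.2 p.2)

/-- The norm of a tangent vector with respect to a Riemannian metric. -/
def RiemannianMetric.tnorm {m : ℕ} {M : Type} [TopologicalSpace M] [ChartedSpace (Euc m) M]
    [IsManifold (𝓡 m) (⊤ : ℕ∞) M] (g : RiemannianMetric m M) (x : M)
    (v : TangentSpace (𝓡 m) x) : ℝ :=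
  Real.sqrt (g.inn x v v)

/-- The differential of a map `f : M → ℝ^ι` at `x`, as a continuous linear map from the
tangent space at `x` to `ℝ^ι`. -/
def mfd (m : ℕ) {M : Type} [TopologicalSpace M] [ChartedSpace (Euc m) M] {ι : Type} [Fintype ι]
    (f : M → EuclideanSpace ℝ ι) (x : M) :
    TangentSpace (𝓡 m) x →L[ℝ] EuclideanSpace ℝ ι :=
  mfderiv (𝓡 m) 𝓘(ℝ, EuclideanSpace ℝ ι) f x

/-- The operator norm, with respect to the Riemannian metric `g` on the tangent space and
the Euclidean norm on the target, of a linear map defined on a tangent space. -/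
def opNormAt {m : ℕ} {M : Type} [TopologicalSpace M] [ChartedSpace (Euc m) M]
    [IsManifold (𝓡 m) (⊤ : ℕ∞) M] (g : RiemannianMetric m M) (x : M)
    {ι : Type} [Fintype ι] (A : TangentSpace (𝓡 m) x →ₗ[ℝ] EuclideanSpace ℝ ι) : ℝ :=
  sSup ((fun v => ‖A v‖) '' {v | g.tnorm x v = 1})

/-- The `C¹`-norm of a map `f : M → ℝ^ι` with respect to a Riemannian metric `g`:
`max_x (‖f x‖ + ‖D_x f‖)`. -/
def C1Norm {m : ℕ} {M : Type} [TopologicalSpace M] [ChartedSpace (Euc m) M]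
    [IsManifold (𝓡 m) (⊤ : ℕ∞) M] (g : RiemannianMetric m M)
    {ι : Type} [Fintype ι] (f : M → EuclideanSpace ℝ ι) : ℝ :=
  ⨆ x : M, (‖f x‖ + opNormAt g x (mfd m f x).toLinearMap)

/-- The `C⁰`-norm of a map `f : M → ℝ^ι`. -/
def C0Norm {M : Type} {ι : Type} [Fintype ι] (f : M → EuclideanSpace ℝ ι) : ℝ :=
  ⨆ x : M, ‖f x‖

/-- `f : M → ℝ^ι` is of class `C¹`. -/
def IsC1 (m : ℕ) {M : Type} [TopologicalSpace M] [ChartedSpace (Euc m) M] {ι : Type} [Fintype ι]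
    (f : M → EuclideanSpace ℝ ι) : Prop :=
  ContMDiff (𝓡 m) 𝓘(ℝ, EuclideanSpace ℝ ι) 1 f

/-- The discriminant: the set of `C¹` maps `M → ℝ^ι` having a singular zero. -/
def Discr (m : ℕ) (M : Type) [TopologicalSpace M] [ChartedSpace (Euc m) M]
    (ι : Type) [Fintype ι] : Set (M → EuclideanSpace ℝ ι) :=
  {h | IsC1 m h ∧ ∃ x : M, h x = 0 ∧
    LinearMap.rank (mfd m h x).toLinearMap < (Fintype.card ι : Cardinal)}

/-- The `C¹`-distance of `f` from the discriminant `Δ`. -/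
def distDiscr {m : ℕ} {M : Type} [TopologicalSpace M] [ChartedSpace (Euc m) M]
    [IsManifold (𝓡 m) (⊤ : ℕ∞) M] (g : RiemannianMetric m M)
    {ι : Type} [Fintype ι] (f : M → EuclideanSpace ℝ ι) : ℝ :=
  sInf ((fun h => C1Norm g (fun x => f x - h x)) '' Discr m M ι)

/-- The map `M → ℝˢ` associated with a finite family of functions `f i : M → ℝ`. -/
def famMap {M : Type} {s : ℕ} (f : Fin s → M → ℝ) : M → EuclideanSpace ℝ (Fin s) :=
  fun x => WithLp.toLp 2 (fun i => f i x : Fin s → ℝ)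

/-- A map `h : M → ℝˢ` is transversal at `x` to the orthant stratification of `ℝˢ`:
the projection of `D_x h` onto the coordinates vanishing at `x` is surjective. -/
def TransvOrthAt (m : ℕ) {M : Type} [TopologicalSpace M] [ChartedSpace (Euc m) M] {s : ℕ}
    (h : M → EuclideanSpace ℝ (Fin s)) (x : M) : Prop :=
  Function.Surjective (fun v : TangentSpace (𝓡 m) x =>
    ((fun j => mfd m h x v j.1) : {i : Fin s // h x i = 0} → ℝ))

/-- The discriminant for families: `C¹` maps `M → ℝˢ` that are not transversal to the
orthant stratification of `ℝˢ`. -/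
def DiscrFam (m : ℕ) (M : Type) [TopologicalSpace M] [ChartedSpace (Euc m) M] (s : ℕ) :
    Set (M → EuclideanSpace ℝ (Fin s)) :=
  {h | IsC1 m h ∧ ¬ ∀ x : M, TransvOrthAt m h x}

/-- The distance `δ(ℱ)` of a family from the discriminant for families. -/
def deltaFam {m : ℕ} {M : Type} [TopologicalSpace M] [ChartedSpace (Euc m) M]
    [IsManifold (𝓡 m) (⊤ : ℕ∞) M] (g : RiemannianMetric m M) {s : ℕ}
    (f : Fin s → M → ℝ) : ℝ :=
  sInf ((fun h => C1Norm g (fun x => famMap f x - h x)) '' DiscrFam m M s)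

/-- The restriction of a family to a subset `J` of its indices, as a map `M → ℝᴶ`. -/
def restrFam {M : Type} {s : ℕ} (f : Fin s → M → ℝ) (J : Finset (Fin s)) :
    M → EuclideanSpace ℝ {j // j ∈ J} :=
  fun x => WithLp.toLp 2 (fun j => f j.1 x : {j // j ∈ J} → ℝ)

/-- Sign relations `<, >, =`. -/
inductive SRel | lt | gt | eq

/-- The condition defined by a sign relation. -/
def SRel.holds : SRel → ℝ → Prop
  | .lt, t => t < 0
  | .gt, t => 0 < t
  | .eq, t => t = 0

/-- Closed sign relations `≤, ≥, =`. -/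
inductive CRel | le | ge | eq

/-- The condition defined by a closed sign relation. -/
def CRel.holds : CRel → ℝ → Prop
  | .le, t => t ≤ 0
  | .ge, t => 0 ≤ t
  | .eq, t => t = 0

/-- The closed relation associated with a sign relation. -/
def SRel.toCRel : SRel → CRel
  | .lt => .le
  | .gt => .ge
  | .eq => .eq

/-- `S` is a semialgebraic-type set on the family `f`. -/
def IsSAT {M : Type} {s : ℕ} (f : Fin s → M → ℝ) (S : Set M) : Prop :=
  ∃ (N : ℕ) (c : Fin N → Fin s → SRel),
    S = ⋃ i, ⋂ j, {x : M | (c i j).holds (f j x)}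

/-- `S` is a closed semialgebraic-type set on the family `f`. -/
def IsClosedSAT {M : Type} {s : ℕ} (f : Fin s → M → ℝ) (S : Set M) : Prop :=
  ∃ (N : ℕ) (c : Fin N → Fin s → CRel),
    S = ⋃ i, ⋂ j, {x : M | (c i j).holds (f j x)}

/-!
The closed relations define a closed set, which gives one inclusion. Conversely, let `x`
satisfy the closed relations of one block and let `J` be the indices with `f j x = 0`. Off `J`
the strict relations persist near `x` by continuity. On `J`, regularity makes `f_J : M → ℝᴶ` a
submersion at `x`, hence open at `x` by the local surjectivity theorem, so every neighbourhood
of `x` contains a point `y` with `f_J y = ε • u`, where `u j ∈ {-1, 1, 0}` is chosen so that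
`ε * u j` satisfies the `j`-th strict relation for every `ε > 0`.
-/

namespace SRel

theorem toCRel_holds_of_holds {r : SRel} {t : ℝ} (h : r.holds t) : r.toCRel.holds t := by
  cases r
  exacts [le_of_lt h, le_of_lt h, h]

theorem eventually_holds_of_toCRel_holds {r : SRel} {t : ℝ} (h : r.toCRel.holds t)
    (ht : t ≠ 0) : ∀ᶠ t' in 𝓝 t, r.holds t' := by
  cases r
  · exact Iio_mem_nhds (lt_of_le_of_ne h ht)
  · exact Ioi_mem_nhds (lt_of_le_of_ne h ht.symm)
  · exact absurd h ht

def sign : SRel → ℝ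
  | .lt => -1
  | .gt => 1
  | .eq => 0

theorem holds_mul_sign (r : SRel) {ε : ℝ} (hε : 0 < ε) : r.holds (ε * r.sign) := by
  cases r <;> simp [holds, sign, hε]

end SRel

theorem CRel.isClosed_setOf_holds (r : CRel) : IsClosed {t : ℝ | r.holds t} := by
  cases r
  exacts [isClosed_Iic, isClosed_Ici, isClosed_singleton]

section LocalSurjectivity

variable {E F M : Type*} [NormedAddCommGroup E] [NormedSpace ℝ E]
  [NormedAddCommGroup F] [NormedSpace ℝ F]
  [TopologicalSpace M] [ChartedSpace E M]

theorem mfderiv_eq_fderiv_comp_extChartAt_symm {φ : M → F} {x : M}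
    (hφ : MDifferentiableAt 𝓘(ℝ, E) 𝓘(ℝ, F) φ x) :
    mfderiv 𝓘(ℝ, E) 𝓘(ℝ, F) φ x =
      fderiv ℝ (φ ∘ (extChartAt 𝓘(ℝ, E) x).symm) (extChartAt 𝓘(ℝ, E) x x) := by
  rw [hφ.mfderiv]
  simp only [writtenInExtChartAt, extChartAt_model_space_eq_id, PartialEquiv.refl_coe,
    Function.id_comp, modelWithCornersSelf_coe, Set.range_id, fderivWithin_univ]
  rfl

theorem map_nhds_eq_of_surjective_mfderiv [CompleteSpace E] [CompleteSpace F] {φ : M → F}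
    {x : M}
    (hφ : ContMDiffAt 𝓘(ℝ, E) 𝓘(ℝ, F) 1 φ x)
    (hsurj : Surjective (mfderiv 𝓘(ℝ, E) 𝓘(ℝ, F) φ x)) :
    map φ (𝓝 x) = 𝓝 (φ x) := by
  set e := extChartAt 𝓘(ℝ, E) x
  have hchart : ContDiffAt ℝ 1 (φ ∘ e.symm) (e x) := by
    simpa [e, chartAt_self_eq, contDiffWithinAt_univ] using (contMDiffAt_iff.1 hφ).2
  have hmap : map (φ ∘ e.symm) (𝓝 (e x)) = 𝓝 (φ x) := by
    rw [(hchart.hasStrictFDerivAt one_ne_zero).map_nhds_eq_of_surj, comp_apply,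
      extChartAt_to_inv]
    rwa [LinearMap.range_eq_top,
      ← mfderiv_eq_fderiv_comp_extChartAt_symm (hφ.mdifferentiableAt one_ne_zero)]
  refine le_antisymm hφ.continuousAt.tendsto ?_
  have hsymm : Tendsto e.symm (𝓝 (e x)) (𝓝 x) := by
    simpa only [e, extChartAt_to_inv] using
      (continuousAt_extChartAt_symm (I := 𝓘(ℝ, E)) x).tendsto
  rw [← hmap, ← map_map]
  exact map_mono hsymm

end LocalSurjectivity

theorem map_restrFam_nhds {m s : ℕ} {M : Type} [TopologicalSpace M] [ChartedSpace (Euc m) M]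
    {f : Fin s → M → ℝ} (hf : IsC1 m (famMap f)) {J : Finset (Fin s)} {x : M}
    (hsurj : Surjective (fun v : TangentSpace (𝓡 m) x =>
      ((fun j => mfd m (famMap f) x v j.1) : {j // j ∈ J} → ℝ))) :
    map (restrFam f J) (𝓝 x) = 𝓝 (restrFam f J x) := by
  let L : EuclideanSpace ℝ (Fin s) →L[ℝ] EuclideanSpace ℝ {j // j ∈ J} :=
    (EuclideanSpace.equiv {j // j ∈ J} ℝ).symm.toContinuousLinearMap ∘L
      ContinuousLinearMap.pi fun j => EuclideanSpace.proj j.1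
  have hL : restrFam f J = L ∘ famMap f := rfl
  rw [hL]
  refine map_nhds_eq_of_surjective_mfderiv (L.contMDiff.contMDiffAt.comp x (hf x)) ?_
  rw [mfderiv_comp x L.mdifferentiableAt ((hf x).mdifferentiableAt one_ne_zero), L.mfderiv_eq]
  exact (EuclideanSpace.equiv {j // j ∈ J} ℝ).symm.surjective.comp hsurj

section Topology

variable {X : Type} [TopologicalSpace X] {s : ℕ} {f : Fin s → X → ℝ}

theorem mem_closure_iInter_setOf_holds (hf : ∀ j, Continuous (f j)) {c : Fin s → SRel} {x : X}
    (hx : ∀ j, (c j).toCRel.holds (f j x)) {J : Finset (Fin s)} (hJ : ∀ j ∉ J, f j x ≠ 0)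
    (hopen : 𝓝 0 ≤ map (restrFam f J) (𝓝 x)) :
    x ∈ closure (⋂ j, {y | (c j).holds (f j y)}) := by
  rw [mem_closure_iff_nhds]
  intro U hU
  have hV : ∀ᶠ y in 𝓝 x, y ∈ U ∧ ∀ j ∉ J, (c j).holds (f j y) := by
    refine (show ∀ᶠ y in 𝓝 x, y ∈ U from hU).and (eventually_all.2 fun j => ?_)
    by_cases hj : j ∈ J
    · exact Eventually.of_forall fun _ hj' => absurd hj hj'
    · exact ((hf j).tendsto x).eventually
        (SRel.eventually_holds_of_toCRel_holds (hx j) (hJ j hj)) |>.mono fun _ hy _ => hy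
  let u : EuclideanSpace ℝ {j // j ∈ J} := WithLp.toLp 2 fun j => (c j).sign
  have hu : Tendsto (fun ε : ℝ => ε • u) (𝓝[>] 0) (𝓝 0) := by
    simpa using ((tendsto_id (x := 𝓝 (0 : ℝ))).smul_const u).mono_left nhdsWithin_le_nhds
  obtain ⟨ε, ⟨y, ⟨hyU, hyJ⟩, hyε⟩, hε⟩ :=
    ((hu.eventually_mem (hopen (image_mem_map hV))).and self_mem_nhdsWithin).exists
  refine ⟨y, hyU, mem_iInter.2 fun j => ?_⟩
  by_cases hj : j ∈ J
  · have hfy : f j y = ε * (c j).sign := congrArg (· ⟨j, hj⟩) hyε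
    show (c j).holds (f j y)
    rw [hfy]
    exact (c j).holds_mul_sign hε
  · exact hyJ j hj

theorem closure_iInter_setOf_holds (hf : ∀ j, Continuous (f j))
    (hopen : ∀ x, 𝓝 0 ≤ map (restrFam f {j | f j x = 0}) (𝓝 x)) (c : Fin s → SRel) :
    closure (⋂ j, {y | (c j).holds (f j y)}) = ⋂ j, {y | (c j).toCRel.holds (f j y)} := by
  refine subset_antisymm (closure_minimal ?_ ?_) fun x hx => ?_
  · exact iInter_mono fun j y => SRel.toCRel_holds_of_holds
  · exact isClosed_iInter fun j => (c j).toCRel.isClosed_setOf_holds.preimage (hf j)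
  · rw [mem_iInter] at hx
    exact mem_closure_iInter_setOf_holds hf hx (by simp) (hopen x)

end Topology

theorem closure_of_sat_general (m s : ℕ) (M : Type) [TopologicalSpace M] [ChartedSpace (Euc m) M]
    (f : Fin s → M → ℝ) (hf : IsC1 m (famMap f))
    (hreg : ∀ (J : Finset (Fin s)) (x : M), (∀ j ∈ J, f j x = 0) →
      Function.Surjective (fun v : TangentSpace (𝓡 m) x =>
        ((fun j => mfd m (famMap f) x v j.1) : {j // j ∈ J} → ℝ)))
    (N : ℕ) (c : Fin N → Fin s → SRel) :
    closure (⋃ i, ⋂ j, {x : M | (c i j).holds (f j x)}) =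
      ⋃ i, ⋂ j, {x : M | ((c i j).toCRel).holds (f j x)} := by
  have hcont : ∀ j, Continuous (f j) := fun j =>
    (EuclideanSpace.proj j).continuous.comp hf.continuous
  have hopen : ∀ x, 𝓝 0 ≤ map (restrFam f {j | f j x = 0}) (𝓝 x) := fun x => by
    have hzero : restrFam f {j | f j x = 0} x = 0 := by
      ext j
      exact (Finset.mem_filter.1 j.2).2
    rw [map_restrFam_nhds hf (hreg _ x (by simp)), hzero]
  rw [closure_iUnion_of_finite]
  exact iUnion_congr fun i => closure_iInter_setOf_holds hcont hopen (c i)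

/-- For a regular family `ℱ = {f₁, …, fₛ}` on a compact Riemannian manifold, the closure of
a semialgebraic-type set is obtained by replacing each strict relation with its closed
counterpart. -/
theorem closure_of_sat (m s : ℕ) (M : Type) [TopologicalSpace M] [ChartedSpace (Euc m) M]
    [IsManifold (𝓡 m) (⊤ : ℕ∞) M] [CompactSpace M] (g : RiemannianMetric m M)
    (f : Fin s → M → ℝ) (hf : IsC1 m (famMap f))
    (hreg : ∀ (J : Finset (Fin s)) (x : M), (∀ j ∈ J, f j x = 0) →
      Function.Surjective (fun v : TangentSpace (𝓡 m) x =>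
        ((fun j => mfd m (famMap f) x v j.1) : {j // j ∈ J} → ℝ)))
    (N : ℕ) (c : Fin N → Fin s → SRel) :
    closure (⋃ i, ⋂ j, {x : M | (c i j).holds (f j x)}) =
      ⋃ i, ⋂ j, {x : M | ((c i j).toCRel).holds (f j x)} :=
  closure_of_sat_general m s M f hf hreg N c
end
end
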